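/- Let A ∈ ℝ^{m×n} with rows a_i, p ∈ ℝ^m, u ∈ ℝ^n, λ > 0, α ∈ ℝ, and fix a row index i ∈ {1,…,m}. Form the augmented matrix Ã = [I_m √(2λ)A] with rows ã_i and right-hand side p̃ = √(2λ)(p − Au). Then the ART (Kaczmarz) update applied to (Ã, p̃) at x̃ = (y, z), namely x̃⁺ = x̃ + α ((p̃_i − ã_iᵀx̃)/‖ã_i‖₂²) ã_i, expressed in the variables y and x = z + u, equals: y_i⁺ = y_i + α (√(2λ)p_i − √(2λ)(Ax)_i − y_i)/(2λΣ_k a_{ik}² + 1) (with all other components of y unchanged), and x_j⁺ = x_j + α ((√(2λ)p_i − √(2λ)(Ax)_i − y_i)/(2λΣ_k a_{ik}² + 1)) √(2λ)a_{ij} for j = 1,…,n. -/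

import Mathlib

/-!
In the variables `y` and `x = z + u`, the residual of row `i` of the augmented system is
`√(2λ)(p_i − (Ax)_i) − y_i` and its squared row norm is `2λ‖a_i‖² + 1` (this needs
`√(2λ)² = 2λ`, i.e. `λ ≥ 0`). Since that row is `[e_i, √(2λ)a_i]`, the ART update moves only
`y_i` among the `y`-components and moves `z`, hence `x`, along `√(2λ)a_i`.
-/

open Finset

/-- The augmented matrix `Ã = [I_m  √(2λ)A] ∈ ℝ^{m×(m+n)}`. -/
noncomputable def artAugMatrix {m n : ℕ} (A : Matrix (Fin m) (Fin n) ℝ) (lam : ℝ) :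
    Matrix (Fin m) (Fin m ⊕ Fin n) ℝ :=
  fun i => Sum.elim (fun k => if i = k then (1 : ℝ) else 0)
    (fun j => Real.sqrt (2 * lam) * A i j)

/-- The augmented right-hand side `p̃ = √(2λ)(p − Au)`. -/
noncomputable def artAugRhs {m n : ℕ} (A : Matrix (Fin m) (Fin n) ℝ)
    (p : Fin m → ℝ) (u : Fin n → ℝ) (lam : ℝ) : Fin m → ℝ :=
  fun i => Real.sqrt (2 * lam) * (p i - A.mulVec u i)

/-- One ART (Kaczmarz) update for row `i` with relaxation `α` applied to the system `(B, q)`: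
`x⁺ = x + α ((q_i − b_iᵀx)/‖b_i‖₂²) b_i`. -/
noncomputable def artStep {m : ℕ} {ι : Type*} [Fintype ι]
    (B : Matrix (Fin m) ι ℝ) (q : Fin m → ℝ) (i : Fin m) (α : ℝ)
    (x : ι → ℝ) : ι → ℝ :=
  fun j => x j + α * ((q i - ∑ k, B i k * x k) / (∑ k, (B i k) ^ 2)) * B i j

section ArtAugMatrix

variable {m n : ℕ} (A : Matrix (Fin m) (Fin n) ℝ) (lam : ℝ) (i : Fin m)

@[simp]
lemma artAugMatrix_inl (k : Fin m) :
    artAugMatrix A lam i (Sum.inl k) = if i = k then 1 else 0 := rfl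

@[simp]
lemma artAugMatrix_inr (j : Fin n) :
    artAugMatrix A lam i (Sum.inr j) = Real.sqrt (2 * lam) * A i j := rfl

lemma artAugMatrix_row_dot (y : Fin m → ℝ) (z : Fin n → ℝ) :
    ∑ k, artAugMatrix A lam i k * Sum.elim y z k = y i + Real.sqrt (2 * lam) * A.mulVec z i := by
  simp [Fintype.sum_sum_type, Matrix.mulVec, dotProduct, Finset.mul_sum, mul_assoc]

lemma artAugMatrix_row_sq_sum {lam : ℝ} (hlam : 0 ≤ lam) :
    ∑ k, (artAugMatrix A lam i k) ^ 2 = 2 * lam * ∑ k, (A i k) ^ 2 + 1 := by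
  have hsqrt : Real.sqrt (2 * lam) ^ 2 = 2 * lam := Real.sq_sqrt (by positivity)
  simp only [Fintype.sum_sum_type, artAugMatrix_inl, artAugMatrix_inr, mul_pow, hsqrt,
    ← Finset.mul_sum, ite_pow, one_pow, zero_pow two_ne_zero, Finset.sum_ite_eq, Finset.mem_univ,
    if_true]
  ring

lemma artAugRhs_sub_row_dot (p : Fin m → ℝ) (u : Fin n → ℝ) (y : Fin m → ℝ) (x : Fin n → ℝ) :
    artAugRhs A p u lam i - ∑ k, artAugMatrix A lam i k * Sum.elim y (x - u) k =
      Real.sqrt (2 * lam) * p i - Real.sqrt (2 * lam) * A.mulVec x i - y i := by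
  rw [artAugMatrix_row_dot, Matrix.mulVec_sub, artAugRhs]
  simp only [Pi.sub_apply]
  ring

end ArtAugMatrix

/-- The ART (Kaczmarz) update for row `i` applied to the augmented system
`[I √(2λ)A]·(y, z) = √(2λ)(p − Au)` at `x̃ = (y, z)` with `z = x − u`, expressed in the
variables `y` and `x = z + u`, gives the stated ART proximal update formulas. -/
theorem art_prox_update
    (m n : ℕ) (A : Matrix (Fin m) (Fin n) ℝ) (p : Fin m → ℝ) (u : Fin n → ℝ)
    (lam α : ℝ) (hlam : 0 < lam) (i : Fin m)
    (y : Fin m → ℝ) (x : Fin n → ℝ) :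
    (artStep (artAugMatrix A lam) (artAugRhs A p u lam) i α
        (Sum.elim y (fun j => x j - u j)) (Sum.inl i) =
      y i + α * (Real.sqrt (2 * lam) * p i - Real.sqrt (2 * lam) * A.mulVec x i - y i) /
        (2 * lam * (∑ k, (A i k) ^ 2) + 1)) ∧
    (∀ i' : Fin m, i' ≠ i →
        artStep (artAugMatrix A lam) (artAugRhs A p u lam) i α
            (Sum.elim y (fun j => x j - u j)) (Sum.inl i') = y i') ∧
    (∀ j : Fin n,
        artStep (artAugMatrix A lam) (artAugRhs A p u lam) i α
            (Sum.elim y (fun j => x j - u j)) (Sum.inr j) + u j =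
          x j + α * ((Real.sqrt (2 * lam) * p i - Real.sqrt (2 * lam) * A.mulVec x i - y i) /
              (2 * lam * (∑ k, (A i k) ^ 2) + 1)) * (Real.sqrt (2 * lam) * A i j)) := by
  have hstep : artStep (artAugMatrix A lam) (artAugRhs A p u lam) i α
      (Sum.elim y (fun j => x j - u j)) = fun k => Sum.elim y (fun j => x j - u j) k +
        α * ((Real.sqrt (2 * lam) * p i - Real.sqrt (2 * lam) * A.mulVec x i - y i) /
          (2 * lam * ∑ k, (A i k) ^ 2 + 1)) * artAugMatrix A lam i k := by
    funext k
    rw [artStep, ← artAugMatrix_row_sq_sum A i hlam.le]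
    exact congrArg (fun r => _ + α * (r / _) * _) (artAugRhs_sub_row_dot A lam i p u y x)
  refine ⟨?_, fun i' hi' => ?_, fun j => ?_⟩
  · simp only [hstep, Sum.elim_inl, artAugMatrix_inl, if_true]
    ring
  · simp [hstep, hi'.symm]
  · simp only [hstep, Sum.elim_inr, artAugMatrix_inr]
    ring
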